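/- Let y* ∈ [2,3], ρ₀ > 1/3, T > 0, and let (ρ, ω) be a left solution with data ρ₀ on [0, T). Then for all z ∈ (0, T): ω(z) > 1/3; ρ(z) + ω(z) < ρ₀ + 1/3; ρ(z)·ω(z) < ρ₀/3; ρ(z) > ω(z); and ρ'(z) < 0. -/

import Mathlib

/-!
Write `f = ρ - ω`. The system gives `ω' > 0` wherever `ω ≤ 1/3` and `f > 0`, so while `f` stays
positive `ω`, which starts at `ω(0) = 1/3`, stays above `1/3` (look at a minimum of `ω`).
Conversely, while `ω > 1/3` we have `f' = (3ω - 1)/z - K f > -K f` with `K` locally bounded, so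
`(f e^{Cz})' > 0` on a compact interval where `K ≤ C`: hence `f`, with `f(0) = ρ₀ - 1/3 > 0`, has
no first zero, and `f > 0`, `ω > 1/3` on all of `(0, T)`. Then `(ρ + ω)' < 0`,
`(ρω)' = ρ(1 - 3ω)/z < 0`, and `ρ'` has the sign of `-ωρf`.
-/

/-- The rescaled self-similar isothermal Euler–Poisson system with parameter `y = y*`,
at the point `z`. -/
def EPSys (y : ℝ) (ρ ω : ℝ → ℝ) (z : ℝ) : Prop :=
  deriv ρ z =
    -(2 * y ^ 2 * z * ω z * ρ z * (ρ z - ω z)) / (1 - y ^ 2 * z ^ 2 * (ω z) ^ 2) ∧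
  deriv ω z =
    (1 - 3 * ω z) / z +
      2 * y ^ 2 * z * (ω z) ^ 2 * (ρ z - ω z) / (1 - y ^ 2 * z ^ 2 * (ω z) ^ 2)

/-- A left solution with data `ρ₀` on `[0, T)`: continuous on `[0,T)`, real analytic
near the origin, with `ρ(0) = ρ₀`, `ω(0) = 1/3`, differentiable on `(0,T)` where it
solves the system and stays subsonic. -/
def LeftSol (y ρ₀ T : ℝ) (ρ ω : ℝ → ℝ) : Prop :=
  ContinuousOn ρ (Set.Ico 0 T) ∧ ContinuousOn ω (Set.Ico 0 T) ∧
  AnalyticAt ℝ ρ 0 ∧ AnalyticAt ℝ ω 0 ∧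
  ρ 0 = ρ₀ ∧ ω 0 = 1 / 3 ∧
  (∀ z ∈ Set.Ioo (0 : ℝ) T,
    DifferentiableAt ℝ ρ z ∧ DifferentiableAt ℝ ω z ∧ EPSys y ρ ω z) ∧
  (∀ z ∈ Set.Ioo (0 : ℝ) T, 0 < 1 - y ^ 2 * z ^ 2 * (ω z) ^ 2)

open Set Topology

theorem HasDerivAt.eventually_nhdsLT_lt {g : ℝ → ℝ} {g' c : ℝ} (hg : HasDerivAt g g' c)
    (hpos : 0 < g') : ∀ᶠ x in 𝓝[<] c, g x < g c := by
  filter_upwards [(hasDerivAt_iff_tendsto_slope_left_right.mp hg).1.eventually (lt_mem_nhds hpos),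
    self_mem_nhdsWithin] with x hslope hx
  rw [slope_def_field] at hslope
  have := (div_pos_iff.mp hslope).resolve_left fun h => (sub_pos.mp h.2).not_gt hx
  linarith [this.1]

theorem lt_of_forall_le_imp_deriv_pos {g : ℝ → ℝ} {a b : ℝ} (hab : a < b)
    (hg : ContinuousOn g (Icc a b)) (hd : ∀ c ∈ Ioc a b, DifferentiableAt ℝ g c)
    (hpos : ∀ c ∈ Ioc a b, g c ≤ g a → 0 < deriv g c) : g a < g b := by
  by_contra! hba
  obtain ⟨m, hm, hmin⟩ := isCompact_Icc.exists_isMinOn (nonempty_Icc.mpr hab.le) hg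
  obtain ⟨c, hc, hca, hcmin⟩ : ∃ c ∈ Ioc a b, g c ≤ g a ∧ IsMinOn g (Icc a b) c := by
    rcases hm.1.eq_or_lt with rfl | ham
    · exact ⟨b, right_mem_Ioc.mpr hab, hba, fun x hx => (hmin hx).trans' hba⟩
    · exact ⟨m, ⟨ham, hm.2⟩, hmin (left_mem_Icc.mpr hab.le), hmin⟩
  obtain ⟨x, hlt, hx⟩ := (((hd c hc).hasDerivAt.eventually_nhdsLT_lt (hpos c hc hca)).and
    (Ioo_mem_nhdsLT hc.1)).exists
  exact (hcmin ⟨hx.1.le, hx.2.le.trans hc.2⟩).not_gt hlt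

theorem exists_first_nonpos {g : ℝ → ℝ} {a b : ℝ} (hab : a ≤ b) (hg : ContinuousOn g (Icc a b))
    (ha : 0 < g a) (hb : g b ≤ 0) : ∃ c ∈ Ioc a b, g c ≤ 0 ∧ ∀ x ∈ Ico a c, 0 < g x := by
  have hS : IsCompact (Icc a b ∩ g ⁻¹' Iic 0) :=
    isCompact_Icc.of_isClosed_subset (hg.preimage_isClosed_of_isClosed isClosed_Icc isClosed_Iic)
      inter_subset_left
  obtain ⟨c, ⟨hc, hgc⟩, hleast⟩ := hS.exists_isLeast ⟨b, right_mem_Icc.mpr hab, hb⟩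
  refine ⟨c, ⟨hc.1.lt_of_ne ?_, hc.2⟩, hgc, fun x hx => ?_⟩
  · rintro rfl
    exact (not_le.mpr ha) hgc
  · by_contra! hgx
    exact (hleast ⟨⟨hx.1, hx.2.le.trans hc.2⟩, hgx⟩).not_gt hx.2

theorem lt_of_hasDerivAt_neg {g g' : ℝ → ℝ} {a b : ℝ} (hab : a < b)
    (hg : ContinuousOn g (Icc a b)) (hd : ∀ x ∈ Ioo a b, HasDerivAt g (g' x) x)
    (hneg : ∀ x ∈ Ioo a b, g' x < 0) : g b < g a :=
  strictAntiOn_of_hasDerivWithinAt_neg (convex_Icc a b) hg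
    (by simpa only [interior_Icc] using fun x hx => (hd x hx).hasDerivWithinAt)
    (by simpa only [interior_Icc] using hneg) (left_mem_Icc.mpr hab.le)
    (right_mem_Icc.mpr hab.le) hab

theorem pos_of_deriv_add_mul_pos {f f' : ℝ → ℝ} {a b C : ℝ} (hab : a < b)
    (hf : ContinuousOn f (Icc a b)) (hd : ∀ x ∈ Ioo a b, HasDerivAt f (f' x) x)
    (hpos : ∀ x ∈ Ioo a b, 0 < f' x + C * f x) (ha : 0 ≤ f a) : 0 < f b := by
  have hmono : StrictMonoOn (fun x => f x * Real.exp (C * x)) (Icc a b) := by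
    refine strictMonoOn_of_hasDerivWithinAt_pos (convex_Icc a b)
      (hf.mul (by fun_prop)) (f' := fun x => (f' x + C * f x) * Real.exp (C * x)) ?_ ?_
    all_goals rw [interior_Icc]; intro x hx
    · have hderiv : HasDerivAt (fun x => f x * Real.exp (C * x))
          ((f' x + C * f x) * Real.exp (C * x)) x :=
        ((hd x hx).mul ((hasDerivAt_id' x).const_mul C).exp).congr_deriv (by ring)
      exact hderiv.hasDerivWithinAt
    · exact mul_pos (hpos x hx) (Real.exp_pos _)
  have := hmono (left_mem_Icc.mpr hab.le) (right_mem_Icc.mpr hab.le) hab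
  exact pos_of_mul_pos_left ((mul_nonneg ha (Real.exp_pos _).le).trans_lt this)
    (Real.exp_pos _).le

section EulerPoisson

variable {y z : ℝ} {ρ ω : ℝ → ℝ}

theorem EPSys.deriv_omega_pos (hs : EPSys y ρ ω z) (hy : y ≠ 0) (hz : 0 < z)
    (hD : 0 < 1 - y ^ 2 * z ^ 2 * ω z ^ 2) (hf : ω z < ρ z) (hω : ω z ≤ 1 / 3) :
    0 < deriv ω z := by
  have hf' : 0 < ρ z - ω z := sub_pos.mpr hf
  rw [hs.2]
  rcases hω.lt_or_eq with hlt | heq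
  · have h1 : 0 < (1 - 3 * ω z) / z := div_pos (by linarith) hz
    have h2 : 0 ≤ 2 * y ^ 2 * z * ω z ^ 2 * (ρ z - ω z) / (1 - y ^ 2 * z ^ 2 * ω z ^ 2) := by
      positivity
    linarith
  · have h1 : (1 - 3 * ω z) / z = 0 := by rw [heq]; norm_num
    have hω0 : 0 < ω z := by rw [heq]; norm_num
    have h2 : 0 < 2 * y ^ 2 * z * ω z ^ 2 * (ρ z - ω z) / (1 - y ^ 2 * z ^ 2 * ω z ^ 2) := by
      positivity
    linarith

theorem EPSys.deriv_rho_neg (hs : EPSys y ρ ω z) (hy : y ≠ 0) (hz : 0 < z)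
    (hD : 0 < 1 - y ^ 2 * z ^ 2 * ω z ^ 2) (hω : 0 < ω z) (hf : ω z < ρ z) :
    deriv ρ z < 0 := by
  have hf' : 0 < ρ z - ω z := sub_pos.mpr hf
  have hρ : 0 < ρ z := hω.trans hf
  rw [hs.1, neg_div, neg_neg_iff_pos]
  positivity

theorem EPSys.deriv_add_neg (hs : EPSys y ρ ω z) (hz : 0 < z)
    (hD : 0 < 1 - y ^ 2 * z ^ 2 * ω z ^ 2) (hω : 1 / 3 < ω z) :
    deriv ρ z + deriv ω z < 0 := by
  have key : deriv ρ z + deriv ω z =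
      ((1 - 3 * ω z) * (1 - y ^ 2 * z ^ 2 * ω z ^ 2) -
        2 * y ^ 2 * z ^ 2 * ω z * (ρ z - ω z) ^ 2) / (z * (1 - y ^ 2 * z ^ 2 * ω z ^ 2)) := by
    rw [hs.1, hs.2]
    field_simp
    ring
  have hω0 : 0 < ω z := by linarith
  have : 0 ≤ 2 * y ^ 2 * z ^ 2 * ω z * (ρ z - ω z) ^ 2 := by positivity
  rw [key]
  refine div_neg_of_neg_of_pos ?_ (by positivity)
  nlinarith [mul_pos (by linarith : 0 < 3 * ω z - 1) hD]

theorem EPSys.deriv_mul_neg (hs : EPSys y ρ ω z) (hz : 0 < z)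
    (hD : 0 < 1 - y ^ 2 * z ^ 2 * ω z ^ 2) (hρ : 0 < ρ z) (hω : 1 / 3 < ω z) :
    deriv ρ z * ω z + ρ z * deriv ω z < 0 := by
  have key : deriv ρ z * ω z + ρ z * deriv ω z = ρ z * (1 - 3 * ω z) / z := by
    rw [hs.1, hs.2]
    field_simp
    ring
  rw [key]
  exact div_neg_of_neg_of_pos (mul_neg_of_pos_of_neg hρ (by linarith)) hz

theorem EPSys.deriv_sub_eq (hs : EPSys y ρ ω z) (hz : z ≠ 0)
    (hD : 1 - y ^ 2 * z ^ 2 * ω z ^ 2 ≠ 0) :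
    deriv ρ z - deriv ω z = (3 * ω z - 1) / z -
      2 * y ^ 2 * z * ω z * (ρ z + ω z) / (1 - y ^ 2 * z ^ 2 * ω z ^ 2) * (ρ z - ω z) := by
  rw [hs.1, hs.2]
  field_simp
  ring

end EulerPoisson

namespace LeftSol

variable {y ρ₀ T : ℝ} {ρ ω : ℝ → ℝ}

theorem one_third_lt_omega (h : LeftSol y ρ₀ T ρ ω) (hy : y ≠ 0) {z : ℝ} (hz : z ∈ Ioo 0 T)
    (hf : ∀ x ∈ Ioc 0 z, ω x < ρ x) : 1 / 3 < ω z := by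
  obtain ⟨-, hωc, -, -, -, hω0, hsol, hsub⟩ := h
  have hIoc : Ioc 0 z ⊆ Ioo 0 T := Ioc_subset_Ioo_right hz.2
  rw [← hω0]
  refine lt_of_forall_le_imp_deriv_pos hz.1 (hωc.mono (Icc_subset_Ico_right hz.2))
    (fun c hc => (hsol c (hIoc hc)).2.1) fun c hc hle => ?_
  exact (hsol c (hIoc hc)).2.2.deriv_omega_pos hy hc.1 (hsub c (hIoc hc)) (hf c hc) (hω0 ▸ hle)

theorem omega_lt_rho_of_forall_Ico (h : LeftSol y ρ₀ T ρ ω) {a c : ℝ} (ha : 0 < a) (hac : a < c)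
    (hcT : c < T) (hf : ∀ x ∈ Ico a c, ω x < ρ x) (hω : ∀ x ∈ Ioo a c, 1 / 3 < ω x) :
    ω c < ρ c := by
  obtain ⟨hρc, hωc, -, -, -, -, hsol, hsub⟩ := h
  have hI : Icc a c ⊆ Ioo 0 T := fun x hx => ⟨ha.trans_le hx.1, hx.2.trans_lt hcT⟩
  have hρc' : ContinuousOn ρ (Icc a c) := hρc.mono fun x hx => Ioo_subset_Ico_self (hI hx)
  have hωc' : ContinuousOn ω (Icc a c) := hωc.mono fun x hx => Ioo_subset_Ico_self (hI hx)
  obtain ⟨C, hC⟩ := isCompact_Icc.bddAbove_image (K := Icc a c)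
    (f := fun x => 2 * y ^ 2 * x * ω x * (ρ x + ω x) / (1 - y ^ 2 * x ^ 2 * ω x ^ 2))
    (ContinuousOn.div (by fun_prop) (by fun_prop) fun x hx => (hsub x (hI hx)).ne')
  refine sub_pos.mp (pos_of_deriv_add_mul_pos (f := fun x => ρ x - ω x)
    (f' := fun x => deriv ρ x - deriv ω x) (C := C) hac
    (hρc'.sub hωc') (fun x hx => ?_) (fun x hx => ?_) (sub_pos.mpr (hf a ⟨le_rfl, hac⟩)).le)
  all_goals have hxT := hI (Ioo_subset_Icc_self hx)
  · exact (hsol x hxT).1.hasDerivAt.sub (hsol x hxT).2.1.hasDerivAt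
  · have hK := hC (mem_image_of_mem _ (Ioo_subset_Icc_self hx))
    have h1 : 0 < (3 * ω x - 1) / x := div_pos (by linarith [hω x hx]) hxT.1
    have h2 : 0 < ρ x - ω x := sub_pos.mpr (hf x (Ioo_subset_Ico_self hx))
    rw [(hsol x hxT).2.2.deriv_sub_eq hxT.1.ne' (hsub x hxT).ne']
    linarith [mul_nonneg (sub_nonneg.mpr hK) h2.le]

theorem omega_lt_rho (h : LeftSol y ρ₀ T ρ ω) (hy : y ≠ 0) (hρ₀ : 1 / 3 < ρ₀) {z : ℝ}
    (hz : z ∈ Ioo 0 T) : ω z < ρ z := by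
  have ⟨hρc, hωc, _, _, hρ0, hω0, _⟩ := h
  by_contra! hle
  obtain ⟨c, hc, hfc, hfpos⟩ := exists_first_nonpos hz.1.le
    ((hρc.sub hωc).mono (Icc_subset_Ico_right hz.2))
    (show 0 < ρ 0 - ω 0 by rw [hρ0, hω0]; linarith) (sub_nonpos.mpr hle)
  have hcT : c < T := hc.2.trans_lt hz.2
  have hf : ∀ x ∈ Ico 0 c, ω x < ρ x := fun x hx => sub_pos.mp (hfpos x hx)
  have hω : ∀ x ∈ Ioo 0 c, 1 / 3 < ω x := fun x hx =>
    h.one_third_lt_omega hy ⟨hx.1, hx.2.trans hcT⟩ fun u hu => hf u ⟨hu.1.le, hu.2.trans_lt hx.2⟩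
  have hc2 : 0 < c / 2 := half_pos hc.1
  exact hfc.not_gt (sub_pos.mpr (h.omega_lt_rho_of_forall_Ico hc2 (half_lt_self hc.1) hcT
    (fun x hx => hf x ⟨hc2.le.trans hx.1, hx.2⟩) fun x hx => hω x ⟨hc2.trans hx.1, hx.2⟩))

theorem rho_add_omega_lt (h : LeftSol y ρ₀ T ρ ω) {z : ℝ} (hz : z ∈ Ioo 0 T)
    (hω : ∀ x ∈ Ioo 0 z, 1 / 3 < ω x) : ρ z + ω z < ρ₀ + 1 / 3 := by
  obtain ⟨hρc, hωc, -, -, hρ0, hω0, hsol, hsub⟩ := h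
  have hI : Ioo 0 z ⊆ Ioo 0 T := Ioo_subset_Ioo_right hz.2.le
  rw [← hρ0, ← hω0]
  exact lt_of_hasDerivAt_neg hz.1 ((hρc.add hωc).mono (Icc_subset_Ico_right hz.2))
    (fun x hx => (hsol x (hI hx)).1.hasDerivAt.add (hsol x (hI hx)).2.1.hasDerivAt)
    fun x hx => (hsol x (hI hx)).2.2.deriv_add_neg hx.1 (hsub x (hI hx)) (hω x hx)

theorem rho_mul_omega_lt (h : LeftSol y ρ₀ T ρ ω) {z : ℝ} (hz : z ∈ Ioo 0 T)
    (hf : ∀ x ∈ Ioo 0 z, ω x < ρ x) (hω : ∀ x ∈ Ioo 0 z, 1 / 3 < ω x) :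
    ρ z * ω z < ρ₀ / 3 := by
  obtain ⟨hρc, hωc, -, -, hρ0, hω0, hsol, hsub⟩ := h
  have hI : Ioo 0 z ⊆ Ioo 0 T := Ioo_subset_Ioo_right hz.2.le
  rw [show ρ₀ / 3 = ρ 0 * ω 0 by rw [hρ0, hω0]; ring]
  exact lt_of_hasDerivAt_neg hz.1 ((hρc.mul hωc).mono (Icc_subset_Ico_right hz.2))
    (fun x hx => (hsol x (hI hx)).1.hasDerivAt.mul (hsol x (hI hx)).2.1.hasDerivAt)
    fun x hx => (hsol x (hI hx)).2.2.deriv_mul_neg hx.1 (hsub x (hI hx))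
      (by linarith [hf x hx, hω x hx]) (hω x hx)

end LeftSol

theorem left_solution_apriori_bounds_general
    (y ρ₀ T : ℝ) (hy : y ∈ Set.Icc (2 : ℝ) 3) (hρ₀ : 1 / 3 < ρ₀)
    (ρ ω : ℝ → ℝ) (h : LeftSol y ρ₀ T ρ ω) :
    ∀ z ∈ Set.Ioo (0 : ℝ) T,
      1 / 3 < ω z ∧
      ρ z + ω z < ρ₀ + 1 / 3 ∧
      ρ z * ω z < ρ₀ / 3 ∧
      ω z < ρ z ∧
      deriv ρ z < 0 := by
  have hy0 : y ≠ 0 := (by linarith [hy.1] : (0 : ℝ) < y).ne'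
  have hf : ∀ z ∈ Ioo 0 T, ω z < ρ z := fun z hz => h.omega_lt_rho hy0 hρ₀ hz
  have hω : ∀ z ∈ Ioo 0 T, 1 / 3 < ω z := fun z hz =>
    h.one_third_lt_omega hy0 hz fun x hx => hf x (Ioc_subset_Ioo_right hz.2 hx)
  intro z hz
  have hI : Ioo 0 z ⊆ Ioo 0 T := Ioo_subset_Ioo_right hz.2.le
  refine ⟨hω z hz, h.rho_add_omega_lt hz fun x hx => hω x (hI hx),
    h.rho_mul_omega_lt hz (fun x hx => hf x (hI hx)) (fun x hx => hω x (hI hx)), hf z hz, ?_⟩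
  obtain ⟨-, -, -, -, -, -, hsol, hsub⟩ := h
  exact (hsol z hz).2.2.deriv_rho_neg hy0 hz.1 (hsub z hz) (by linarith [hω z hz]) (hf z hz)

/-- A priori bounds for left solutions with data `ρ₀ > 1/3`. -/
theorem left_solution_apriori_bounds
    (y ρ₀ T : ℝ) (hy : y ∈ Set.Icc (2 : ℝ) 3) (hρ₀ : 1 / 3 < ρ₀) (hT : 0 < T)
    (ρ ω : ℝ → ℝ) (h : LeftSol y ρ₀ T ρ ω) :
    ∀ z ∈ Set.Ioo (0 : ℝ) T,
      1 / 3 < ω z ∧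
      ρ z + ω z < ρ₀ + 1 / 3 ∧
      ρ z * ω z < ρ₀ / 3 ∧
      ω z < ρ z ∧
      deriv ρ z < 0 :=
  left_solution_apriori_bounds_general y ρ₀ T hy hρ₀ ρ ω h
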